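/- arXiv:2004.05253 — 2 statements merged into one kernel-verified Lean document; each statement's English description precedes it below -/
import Mathlib

section
/- An operator F on a normed space is power bounded and power bounded below (there exist γ, β > 0 with γ‖z‖ ≤ ‖Fⁿz‖ ≤ β‖z‖ for all n ≥ 1 and all z) if and only if F is similar to an isometry, in the sense that there is an equivalent norm under which F is an isometry. -/
/-!
If `γ‖z‖ ≤ ‖Fⁿz‖ ≤ β‖z‖` for `n ≥ 1`, the asymptotic norm `z ↦ limsup ‖Fⁿz‖` is a seminorm
squeezed between `γ‖·‖` and `β‖·‖`, and `F` is an isometry for it because a limsup does not see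
the shift `n ↦ n + 1`. Conversely, if `F` is an isometry for `N` with `γ‖·‖ ≤ N ≤ β‖·‖`, then so
is every `Fⁿ`, which gives the bounds with constants `γ / β` and `β / γ`.
-/

open Filter

namespace ContinuousLinearMap

variable {𝕜 E : Type*} [NormedField 𝕜] [SeminormedAddCommGroup E] [NormedSpace 𝕜 E]

noncomputable def orbitLimsupNorm (F : E →L[𝕜] E) (z : E) : ℝ :=
  limsup (fun n => ‖(F ^ n) z‖) atTop

variable (F : E →L[𝕜] E)

lemma isCoboundedUnder_norm_pow_apply (z : E) :
    IsCoboundedUnder (· ≤ ·) atTop fun n => ‖(F ^ n) z‖ :=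
  isCoboundedUnder_le_of_le atTop fun _ => norm_nonneg _

theorem orbitLimsupNorm_apply_self (z : E) : orbitLimsupNorm F (F z) = orbitLimsupNorm F z := by
  have hshift : ∀ n : ℕ, (F ^ n) (F z) = (F ^ (n + 1)) z := fun n => by
    rw [pow_succ, mul_apply_eq_comp]
  simp only [orbitLimsupNorm, hshift]
  exact limsup_nat_add (fun n => ‖(F ^ n) z‖) 1

theorem orbitLimsupNorm_smul {z : E} (hz : IsBoundedUnder (· ≤ ·) atTop fun n => ‖(F ^ n) z‖)
    (c : 𝕜) : orbitLimsupNorm F (c • z) = ‖c‖ * orbitLimsupNorm F z := by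
  have hmono : Monotone (‖c‖ * ·) := fun _ _ h => mul_le_mul_of_nonneg_left h (norm_nonneg c)
  simp only [orbitLimsupNorm, map_smul, norm_smul]
  exact (hmono.map_limsup_of_continuousAt _ (continuous_const_mul _).continuousAt hz
    (isCoboundedUnder_norm_pow_apply F z)).symm

theorem orbitLimsupNorm_add_le {z w : E}
    (hz : IsBoundedUnder (· ≤ ·) atTop fun n => ‖(F ^ n) z‖)
    (hw : IsBoundedUnder (· ≤ ·) atTop fun n => ‖(F ^ n) w‖) :
    orbitLimsupNorm F (z + w) ≤ orbitLimsupNorm F z + orbitLimsupNorm F w :=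
  calc orbitLimsupNorm F (z + w)
      ≤ limsup ((fun n => ‖(F ^ n) z‖) + fun n => ‖(F ^ n) w‖) atTop :=
        limsup_le_limsup (Eventually.of_forall fun n => by simpa using norm_add_le _ _)
          (isCoboundedUnder_norm_pow_apply F _) (isBoundedUnder_le_add hz hw)
    _ ≤ orbitLimsupNorm F z + orbitLimsupNorm F w :=
        limsup_add_le (isBoundedUnder_of ⟨0, fun _ => norm_nonneg _⟩) hz
          (isCoboundedUnder_norm_pow_apply F w) hw

theorem orbitLimsupNorm_le {z : E} {C : ℝ} (h : ∀ᶠ n in atTop, ‖(F ^ n) z‖ ≤ C) :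
    orbitLimsupNorm F z ≤ C :=
  limsup_le_of_le (isCoboundedUnder_norm_pow_apply F z) h

theorem le_orbitLimsupNorm {z : E} {C : ℝ}
    (hz : IsBoundedUnder (· ≤ ·) atTop fun n => ‖(F ^ n) z‖)
    (h : ∀ᶠ n in atTop, C ≤ ‖(F ^ n) z‖) : C ≤ orbitLimsupNorm F z :=
  le_limsup_of_frequently_le h.frequently hz

theorem apply_pow_apply_eq_of_apply_eq {N : E → ℝ} (hN : ∀ z, N (F z) = N z) (n : ℕ) (z : E) :
    N ((F ^ n) z) = N z := by
  induction n with
  | zero => rfl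
  | succ n ih => rw [pow_succ', mul_apply_eq_comp, hN, ih]

theorem norm_pow_apply_bounds_of_isometry {N : E → ℝ} {γ β : ℝ} (hγ : 0 < γ) (hβ : 0 < β)
    (hN : ∀ z, γ * ‖z‖ ≤ N z ∧ N z ≤ β * ‖z‖) (hF : ∀ z, N (F z) = N z) (n : ℕ) (z : E) :
    γ / β * ‖z‖ ≤ ‖(F ^ n) z‖ ∧ ‖(F ^ n) z‖ ≤ β / γ * ‖z‖ := by
  have hFn := hN ((F ^ n) z)
  rw [apply_pow_apply_eq_of_apply_eq F hF] at hFn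
  rw [div_mul_eq_mul_div, div_mul_eq_mul_div, div_le_iff₀ hβ, le_div_iff₀ hγ]
  constructor <;> linarith [hN z]

end ContinuousLinearMap

/-- An operator `F` on a complex normed space is power bounded and power bounded below
(there exist `γ, β > 0` with `γ‖z‖ ≤ ‖Fⁿz‖ ≤ β‖z‖` for all `n ≥ 1` and all `z`) if and
only if `F` is similar to an isometry, in the sense that there is a norm `N` on `Z`,
equivalent to the original norm, with `N (F z) = N z` for all `z`. -/
theorem stmt13
    {Z : Type*} [NormedAddCommGroup Z] [NormedSpace ℂ Z]
    (F : Z →L[ℂ] Z) :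
    (∃ γ β : ℝ, 0 < γ ∧ 0 < β ∧
      ∀ n : ℕ, 1 ≤ n → ∀ z : Z, γ * ‖z‖ ≤ ‖(F ^ n) z‖ ∧ ‖(F ^ n) z‖ ≤ β * ‖z‖) ↔
    (∃ N : Z → ℝ,
      -- N is a norm
      (∀ (c : ℂ) (z : Z), N (c • z) = ‖c‖ * N z) ∧
      (∀ z w : Z, N (z + w) ≤ N z + N w) ∧
      -- equivalent to the original norm
      (∃ γ β : ℝ, 0 < γ ∧ 0 < β ∧ ∀ z : Z, γ * ‖z‖ ≤ N z ∧ N z ≤ β * ‖z‖) ∧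
      -- F is an isometry with respect to N
      (∀ z : Z, N (F z) = N z)) := by
  constructor
  · rintro ⟨γ, β, hγ, hβ, hF⟩
    have hlow : ∀ z, ∀ᶠ n in atTop, γ * ‖z‖ ≤ ‖(F ^ n) z‖ := fun z =>
      eventually_atTop.2 ⟨1, fun n hn => (hF n hn z).1⟩
    have hup : ∀ z, ∀ᶠ n in atTop, ‖(F ^ n) z‖ ≤ β * ‖z‖ := fun z =>
      eventually_atTop.2 ⟨1, fun n hn => (hF n hn z).2⟩
    have hbdd : ∀ z, IsBoundedUnder (· ≤ ·) atTop fun n => ‖(F ^ n) z‖ := fun z =>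
      isBoundedUnder_of_eventually_le (hup z)
    exact ⟨F.orbitLimsupNorm, fun c z => F.orbitLimsupNorm_smul (hbdd z) c,
      fun z w => F.orbitLimsupNorm_add_le (hbdd z) (hbdd w),
      ⟨γ, β, hγ, hβ, fun z =>
        ⟨F.le_orbitLimsupNorm (hbdd z) (hlow z), F.orbitLimsupNorm_le (hup z)⟩⟩,
      F.orbitLimsupNorm_apply_self⟩
  · rintro ⟨N, -, -, ⟨γ, β, hγ, hβ, hN⟩, hF⟩
    exact ⟨γ / β, β / γ, div_pos hγ hβ, div_pos hβ hγ,
      fun n _ z => F.norm_pow_apply_bounds_of_isometry hγ hβ hN hF n z⟩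
end

section
/- If a weakly l-sequentially supercyclic bounded operator T on a Hilbert space is similar to an isometry, then T is similar to a unitary operator. -/
open Filter Topology

/-- `y` is a weakly l-sequentially supercyclic vector for an operator `S`. -/
def WeaklyLSeqSupercyclicVector {W : Type*} [NormedAddCommGroup W] [NormedSpace ℂ W]
    (S : W →L[ℂ] W) (y : W) : Prop :=
  y ≠ 0 ∧ ∀ w : W, ∃ α : ℕ → ℂ, (∀ i, α i ≠ 0) ∧ ∃ n : ℕ → ℕ, StrictMono n ∧
    ∀ f : W →L[ℂ] ℂ, Tendsto (fun i => f (α i • (S ^ n i) y - w)) atTop (𝓝 0)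

/-! A weakly supercyclic operator has dense range, since the weak closure of the subspace
`range T`, which contains every `α • Tⁿ y` with `n ≥ 1`, is its norm closure. Hence an isometry
similar to `T` has dense closed range, i.e. it is unitary. -/

theorem Convex.mem_of_tendsto_dual {𝕜 W ι : Type*} [RCLike 𝕜] [NormedAddCommGroup W]
    [NormedSpace 𝕜 W] [NormedSpace ℝ W] [IsScalarTower ℝ 𝕜 W] {l : Filter ι} [l.NeBot]
    {s : Set W} (hs : Convex ℝ s) (hs' : IsClosed s) {u : ι → W} {w : W} (hu : ∀ᶠ i in l, u i ∈ s)
    (hlim : ∀ f : StrongDual 𝕜 W, Tendsto (fun i => f (u i)) l (𝓝 (f w))) : w ∈ s := by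
  by_contra hw
  obtain ⟨f, c, hfw, hfs⟩ := RCLike.geometric_hahn_banach_point_closed (𝕜 := 𝕜) hs hs' hw
  have hlt : ∀ᶠ i in l, RCLike.re (f (u i)) < c :=
    (RCLike.continuous_re.tendsto _ |>.comp (hlim f)).eventually (gt_mem_nhds hfw)
  obtain ⟨i, hi, hlt⟩ := (hu.and hlt).exists
  exact (hfs _ hi).not_gt hlt

theorem WeaklyLSeqSupercyclicVector.denseRange {W : Type*} [NormedAddCommGroup W]
    [NormedSpace ℂ W] {T : W →L[ℂ] W} {y : W} (hy : WeaklyLSeqSupercyclicVector T y) :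
    DenseRange T := by
  let R := LinearMap.range (T : W →ₗ[ℂ] W)
  refine fun w => (?_ : w ∈ closure (R : Set W))
  obtain ⟨α, -, n, hn, hlim⟩ := hy.2 w
  have hmem : ∀ᶠ i in atTop, α i • (T ^ n i) y ∈ closure (R : Set W) := by
    filter_upwards [eventually_ge_atTop 1] with i hi
    obtain ⟨k, hk⟩ := Nat.exists_eq_add_of_le' (hi.trans hn.le_apply)
    refine subset_closure (R.smul_mem _ ⟨(T ^ k) y, ?_⟩)
    rw [hk, pow_succ']
    rfl
  refine (R.restrictScalars ℝ).convex.closure.mem_of_tendsto_dual (𝕜 := ℂ) isClosed_closure hmem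
    fun f => ?_
  simpa [sub_eq_zero] using (hlim f).add_const (f w)

theorem Isometry.surjective_of_denseRange {α β : Type*} [EMetricSpace α] [CompleteSpace α]
    [EMetricSpace β] {f : α → β} (hf : Isometry f) (hd : DenseRange f) : Function.Surjective f :=
  Set.range_eq_univ.mp (hf.isClosedEmbedding.isClosed_range.closure_eq ▸ hd.closure_range)

theorem DenseRange.conj {𝕜 X : Type*} [NormedField 𝕜] [NormedAddCommGroup X] [NormedSpace 𝕜 X]
    {T : X →L[𝕜] X} (hT : DenseRange T) (S : X ≃L[𝕜] X) :
    DenseRange fun x => S.symm (T (S x)) :=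
  S.symm.surjective.denseRange.comp (hT.comp S.surjective.denseRange T.continuous)
    S.symm.continuous

/-- If a weakly l-sequentially supercyclic bounded operator `T` on a complex Hilbert
space is similar to an isometry, then `T` is similar to a unitary operator (a surjective
isometry). -/
theorem stmt16
    {X : Type*} [NormedAddCommGroup X] [InnerProductSpace ℂ X] [CompleteSpace X]
    (T : X →L[ℂ] X)
    (hsc : ∃ y : X, WeaklyLSeqSupercyclicVector T y)
    (S : X ≃L[ℂ] X) (hiso : ∀ x : X, ‖S.symm (T (S x))‖ = ‖x‖) :
    ∃ S' : X ≃L[ℂ] X,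
      (∀ x : X, ‖S'.symm (T (S' x))‖ = ‖x‖) ∧
      Function.Surjective (fun x : X => S'.symm (T (S' x))) := by
  obtain ⟨y, hy⟩ := hsc
  let A : X →L[ℂ] X := (S.symm : X →L[ℂ] X) ∘L T ∘L (S : X →L[ℂ] X)
  have hA : Isometry A := AddMonoidHomClass.isometry_of_norm A hiso
  exact ⟨S, hiso, hA.surjective_of_denseRange (hy.denseRange.conj S)⟩
end
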